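/- The unique maximizer (ξ_j^{(N)*})_{j=1}^N of T_N is strictly decreasing in j and all its entries are strictly positive: ξ_1^{(N)*} > ξ_2^{(N)*} > … > ξ_N^{(N)*} > 0. -/

import Mathlib

open Real

/-- The finite-horizon throughput functional `T_N` (log base 2), evaluated at a
sequence indexed from 1 (only coordinates `1,…,N` matter). -/
noncomputable def TN (B γ p : ℝ) (w N : ℕ) (ξ : ℕ → ℝ) : ℝ :=
  (∑ k ∈ Finset.Icc 1 w, p ^ 2 * (1 - p) ^ (k - 1) * ((k : ℝ) / 2) *
      Real.logb 2 (1 + γ * B / k))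
  + (∑ j ∈ Finset.Icc 1 N, p * (1 - p) ^ (j + w - 1) * (1 / 2) *
      Real.logb 2 (1 + γ * ξ j))
  + (∑ k ∈ Finset.Icc 1 N, p ^ 2 * (1 - p) ^ (k + w - 1) * ((w : ℝ) / 2) *
      Real.logb 2 (1 + (γ / w) * (B - ∑ j ∈ Finset.Icc 1 k, ξ j)))
  + p * (1 - p) ^ (w + N) * ((w : ℝ) / 2) *
      Real.logb 2 (1 + (γ / w) * (B - ∑ j ∈ Finset.Icc 1 N, ξ j))

/-- The admissible simplex `{ξ : ξ_j ≥ 0, ∑_{j=1}^N ξ_j ≤ B}`, as sequences supported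
on coordinates `1,…,N`. -/
def adm (B : ℝ) (N : ℕ) : Set (ℕ → ℝ) :=
  {ξ | (∀ j, 1 ≤ j → j ≤ N → 0 ≤ ξ j) ∧ (∀ j, j = 0 ∨ N < j → ξ j = 0)
      ∧ ∑ j ∈ Finset.Icc 1 N, ξ j ≤ B}

/-!
Up to an additive constant and the factor `1 / log 2`, `T_N` is the concave function
`∑ a_j log (1 + γ ξ_j) + ∑ w β_k log (1 + γ R_k / w)`, where `R_k = B - ξ_1 - ⋯ - ξ_k`,
`a_j = p (1 - p)^(j + w - 1) / 2` is positive and strictly decreasing, and the weights `β_k`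
satisfy `β_i + ⋯ + β_N = a_i`. The partial derivative in `ξ_i` is `a_i γ / (1 + γ ξ_i)` minus a
budget price `∑_{k ≥ i} γ β_k / (1 + γ R_k / w) ≤ γ a_i`, with equality iff `R_i = ⋯ = R_N = 0`.

At a maximizer the budget is not exhausted: otherwise, at the first index `l` where it runs
out, `ξ_l > 0` and the price equals `γ a_l`, so decreasing `ξ_l` would help. Then no coordinate
vanishes, since increasing a zero coordinate would help. Hence all partial derivatives vanish,
and comparing them at `j` and `j + 1` shows that `a_j / (1 + γ ξ_j)` is the combination
`a_{j+1} / (1 + γ ξ_{j+1}) + (a_j - a_{j+1}) / (1 + γ R_j / w)`. By downward induction from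
`j = N`, `ξ_{j+1} ≤ R_{j+1} / w < R_j / w`, so `1 + γ ξ_j` lies strictly between
`1 + γ ξ_{j+1}` and `1 + γ R_j / w`.
-/

open Finset

theorem HasDerivAt.mul_nonpos_of_isMaxOn_segment {f : ℝ → ℝ} {f' x y : ℝ}
    (hf : HasDerivAt f f' x) (hmax : IsMaxOn f (segment ℝ x (x + y)) x) : f' * y ≤ 0 := by
  simpa [mul_comm] using hmax.localize.hasFDerivWithinAt_nonpos hf.hasFDerivAt.hasFDerivWithinAt
    (mem_posTangentConeAt_of_segment_subset subset_rfl)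

theorem lt_and_lt_of_div_eq_div_add_div {a a' X Y Z : ℝ} (ha' : 0 < a') (ha : a' < a)
    (hX : 0 < X) (hY : 0 < Y) (hYZ : Y < Z) (h : a / X = a' / Y + (a - a') / Z) :
    Y < X ∧ X < Z := by
  have hZ : 0 < Z := hY.trans hYZ
  have ha₀ : 0 < a := ha'.trans ha
  constructor
  · refine (div_lt_div_iff_of_pos_left ha₀ hX hY).1 ?_
    calc a / X = a' / Y + (a - a') / Z := h
      _ < a' / Y + (a - a') / Y := by gcongr
      _ = a / Y := by ring
  · refine (div_lt_div_iff_of_pos_left ha₀ hZ hX).1 ?_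
    calc a / Z = a' / Z + (a - a') / Z := by ring
      _ < a' / Y + (a - a') / Z := by gcongr
      _ = a / X := h.symm

namespace Throughput

-- `β_k`; its value `a_N` at `k = N` absorbs the last term of `T_N` (`objective_eq_of_one_le`).
def tailWeight (a : ℕ → ℝ) (N k : ℕ) : ℝ := a k - if k < N then a (k + 1) else 0

def residual (B : ℝ) (ξ : ℕ → ℝ) (k : ℕ) : ℝ := B - ∑ m ∈ Icc 1 k, ξ m

noncomputable def objective (a : ℕ → ℝ) (γ w B : ℝ) (N : ℕ) (ξ : ℕ → ℝ) : ℝ :=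
  ∑ j ∈ Icc 1 N, a j * log (1 + γ * ξ j) +
    ∑ k ∈ Icc 1 N, w * tailWeight a N k * log (1 + γ / w * residual B ξ k)

noncomputable def budgetPrice (a : ℕ → ℝ) (γ w B : ℝ) (N : ℕ) (ξ : ℕ → ℝ) (i : ℕ) : ℝ :=
  ∑ k ∈ Icc i N, γ * tailWeight a N k / (1 + γ / w * residual B ξ k)

noncomputable def marginal (a : ℕ → ℝ) (γ w B : ℝ) (N : ℕ) (ξ : ℕ → ℝ) (i : ℕ) : ℝ :=
  a i * γ / (1 + γ * ξ i) - budgetPrice a γ w B N ξ i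

section

variable {a : ℕ → ℝ} {γ w B : ℝ} {N : ℕ} {ξ : ℕ → ℝ}

theorem tailWeight_of_lt {k : ℕ} (hk : k < N) : tailWeight a N k = a k - a (k + 1) := by
  simp [tailWeight, hk]

theorem tailWeight_self : tailWeight a N N = a N := by
  simp [tailWeight]

theorem tailWeight_pos (ha : StrictAnti a) (ha₀ : ∀ j, 0 < a j) {k : ℕ} (hk : k ≤ N) :
    0 < tailWeight a N k := by
  rcases hk.lt_or_eq with hk | rfl
  · rw [tailWeight_of_lt hk]
    exact sub_pos.2 (ha k.lt_succ_self)
  · rw [tailWeight_self]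
    exact ha₀ k

theorem sum_tailWeight {i : ℕ} (hi : i ≤ N) : ∑ k ∈ Icc i N, tailWeight a N k = a i := by
  induction hi using Nat.decreasingInduction with
  | self => simp [tailWeight_self]
  | of_succ k hk ih =>
    rw [← add_sum_Ioc_eq_sum_Icc hk.le, ← Icc_add_one_left_eq_Ioc, ih, tailWeight_of_lt hk]
    ring

theorem residual_zero : residual B ξ 0 = B := by
  simp [residual]

theorem residual_succ (k : ℕ) : residual B ξ (k + 1) = residual B ξ k - ξ (k + 1) := by
  rw [residual, residual, sum_Icc_succ_top (by omega)]
  ring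

theorem residual_le_residual (hξ : ξ ∈ adm B N) {k l : ℕ} (hkl : k ≤ l) (hl : l ≤ N) :
    residual B ξ l ≤ residual B ξ k := by
  refine sub_le_sub_left (sum_le_sum_of_subset_of_nonneg (Icc_subset_Icc le_rfl hkl) ?_) B
  intro m hm _
  exact hξ.1 m (mem_Icc.1 hm).1 ((mem_Icc.1 hm).2.trans hl)

theorem residual_nonneg (hξ : ξ ∈ adm B N) {k : ℕ} (hk : k ≤ N) : 0 ≤ residual B ξ k :=
  (sub_nonneg.2 hξ.2.2).trans (residual_le_residual hξ hk le_rfl)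

theorem objective_eq_of_one_le (hN : 1 ≤ N) (ξ : ℕ → ℝ) :
    objective a γ w B N ξ =
      ∑ j ∈ Icc 1 N, a j * log (1 + γ * ξ j) +
        ∑ k ∈ Icc 1 N, w * (a k - a (k + 1)) * log (1 + γ / w * residual B ξ k) +
        w * a (N + 1) * log (1 + γ / w * residual B ξ N) := by
  obtain ⟨M, rfl⟩ := Nat.exists_eq_add_of_le' hN
  rw [objective, add_assoc]
  congr 1
  rw [sum_Icc_succ_top hN, sum_Icc_succ_top hN, tailWeight_self,
    sum_congr rfl fun k hk => by rw [tailWeight_of_lt (by simp at hk; omega)]]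
  ring

theorem budgetPrice_eq_add {i : ℕ} (hi : i ≤ N) :
    budgetPrice a γ w B N ξ i =
      γ * tailWeight a N i / (1 + γ / w * residual B ξ i) + budgetPrice a γ w B N ξ (i + 1) := by
  rw [budgetPrice, budgetPrice, ← add_sum_Ioc_eq_sum_Icc hi, Icc_add_one_left_eq_Ioc]

theorem budgetPrice_of_residual_eq_zero {i : ℕ} (hi : i ≤ N)
    (hR : ∀ k ∈ Icc i N, residual B ξ k = 0) : budgetPrice a γ w B N ξ i = γ * a i := by
  rw [budgetPrice, sum_congr rfl fun k hk => by rw [hR k hk, mul_zero, add_zero, div_one],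
    ← mul_sum, sum_tailWeight hi]

theorem budgetPrice_lt (hγ : 0 < γ) (hw : 0 < w) (ha : StrictAnti a) (ha₀ : ∀ j, 0 < a j)
    (hξ : ξ ∈ adm B N) (hN : 0 < residual B ξ N) {i : ℕ} (hi : i ≤ N) :
    budgetPrice a γ w B N ξ i < γ * a i := by
  rw [budgetPrice, ← sum_tailWeight (a := a) hi, mul_sum]
  refine sum_lt_sum (fun k hk => ?_) ⟨N, mem_Icc.2 ⟨hi, le_rfl⟩, ?_⟩
  · have := tailWeight_pos ha ha₀ (mem_Icc.1 hk).2
    have := residual_nonneg hξ (mem_Icc.1 hk).2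
    exact div_le_self (by positivity) (by simp only [le_add_iff_nonneg_right]; positivity)
  · have := tailWeight_pos ha ha₀ (le_refl N)
    exact div_lt_self (by positivity) (by simp only [lt_add_iff_pos_right]; positivity)

theorem residual_add_smul (t : ℝ) (d : ℕ → ℝ) (k : ℕ) :
    residual B (ξ + t • d) k = residual B ξ k - t * ∑ m ∈ Icc 1 k, d m := by
  simp only [residual, Pi.add_apply, Pi.smul_apply, smul_eq_mul, sum_add_distrib, mul_sum]
  ring

theorem sum_mul_sum_Icc_comm (c d : ℕ → ℝ) :
    ∑ k ∈ Icc 1 N, c k * ∑ m ∈ Icc 1 k, d m = ∑ m ∈ Icc 1 N, d m * ∑ k ∈ Icc m N, c k := by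
  simp only [mul_sum]
  rw [sum_comm' (t' := Icc 1 N) (s' := fun m => Icc m N)
    (fun k m => by simp only [mem_Icc]; omega)]
  simp only [mul_comm]

theorem hasDerivAt_objective_add_smul (hw : w ≠ 0) (hξ : ∀ j ∈ Icc 1 N, 1 + γ * ξ j ≠ 0)
    (hR : ∀ k ∈ Icc 1 N, 1 + γ / w * residual B ξ k ≠ 0) (d : ℕ → ℝ) :
    HasDerivAt (fun t : ℝ => objective a γ w B N (ξ + t • d))
      (∑ i ∈ Icc 1 N, d i * marginal a γ w B N ξ i) 0 := by
  have hlog (c u v : ℝ) (hu : 1 + u ≠ 0) :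
      HasDerivAt (fun t : ℝ => c * log (1 + (u + t * v))) (c * (v / (1 + u))) 0 := by
    have := ((((hasDerivAt_id (0 : ℝ)).mul_const v).const_add u).const_add 1).log
      (by simpa using hu) |>.const_mul c
    simpa using this
  have h₁ := HasDerivAt.fun_sum fun j hj => hlog (a j) (γ * ξ j) (γ * d j) (hξ j hj)
  have h₂ := HasDerivAt.fun_sum fun k hk => hlog (w * tailWeight a N k)
    (γ / w * residual B ξ k) (-(γ / w * ∑ m ∈ Icc 1 k, d m)) (hR k hk)
  refine ((h₁.add h₂).congr_of_eventuallyEq (.of_forall fun t => ?_)).congr_deriv ?_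
  · simp only [objective, residual_add_smul, Pi.add_apply, Pi.smul_apply, smul_eq_mul]
    congr 1 <;> refine sum_congr rfl fun k _ => ?_ <;> ring_nf
  · have h₂' : ∑ k ∈ Icc 1 N, w * tailWeight a N k *
          (-(γ / w * ∑ m ∈ Icc 1 k, d m) / (1 + γ / w * residual B ξ k)) =
        -∑ k ∈ Icc 1 N, γ * tailWeight a N k / (1 + γ / w * residual B ξ k) *
          ∑ m ∈ Icc 1 k, d m := by
      rw [← sum_neg_distrib]
      refine sum_congr rfl fun k _ => ?_
      field_simp
    rw [h₂', sum_mul_sum_Icc_comm, ← sub_eq_add_neg, ← sum_sub_distrib]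
    refine sum_congr rfl fun i _ => ?_
    rw [marginal, budgetPrice]
    ring

theorem add_smul_single_mem_adm (hξ : ξ ∈ adm B N) {i : ℕ} (hi : i ∈ Icc 1 N) {t : ℝ}
    (ht₁ : -ξ i ≤ t) (ht₂ : t ≤ residual B ξ N) : ξ + t • Pi.single i 1 ∈ adm B N := by
  obtain ⟨hi₁, hi₂⟩ := mem_Icc.1 hi
  refine ⟨fun j hj₁ hj₂ => ?_, fun j hj => ?_, sub_nonneg.1 ?_⟩
  · rcases eq_or_ne j i with rfl | hji
    · simp only [Pi.add_apply, Pi.smul_apply, Pi.single_eq_same, smul_eq_mul, mul_one]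
      linarith
    · simpa [hji] using hξ.1 j hj₁ hj₂
  · have hji : j ≠ i := by omega
    simp [hji, hξ.2.1 j hj]
  · change 0 ≤ residual B (ξ + t • Pi.single i 1) N
    rw [residual_add_smul, sum_pi_single', if_pos hi]
    linarith

theorem marginal_mul_nonpos (hγ : 0 ≤ γ) (hw : 0 < w) (hξ : ξ ∈ adm B N)
    (hmax : IsMaxOn (objective a γ w B N) (adm B N) ξ) {i : ℕ} (hi : i ∈ Icc 1 N) {y : ℝ}
    (hy₁ : -ξ i ≤ y) (hy₂ : y ≤ residual B ξ N) : marginal a γ w B N ξ i * y ≤ 0 := by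
  have hderiv := hasDerivAt_objective_add_smul (a := a) (γ := γ) (B := B) (N := N) (ξ := ξ)
    hw.ne' (fun j hj => by have := hξ.1 j (mem_Icc.1 hj).1 (mem_Icc.1 hj).2; positivity)
    (fun k hk => by have := residual_nonneg hξ (mem_Icc.1 hk).2; positivity) (Pi.single i 1)
  rw [sum_eq_single_of_mem i hi fun j _ hji => by simp [hji], Pi.single_eq_same, one_mul]
    at hderiv
  refine hderiv.mul_nonpos_of_isMaxOn_segment (isMaxOn_iff.2 fun t ht => ?_)
  rw [zero_add, segment_eq_uIcc] at ht
  have hy : y ∈ Set.Icc (-ξ i) (residual B ξ N) := ⟨hy₁, hy₂⟩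
  have h0 : (0 : ℝ) ∈ Set.Icc (-ξ i) (residual B ξ N) :=
    ⟨by linarith [hξ.1 i (mem_Icc.1 hi).1 (mem_Icc.1 hi).2], residual_nonneg hξ le_rfl⟩
  obtain ⟨ht₁, ht₂⟩ := Set.uIcc_subset_Icc h0 hy ht
  simpa using hmax (add_smul_single_mem_adm hξ hi ht₁ ht₂)

theorem marginal_nonneg_of_isMaxOn (hγ : 0 ≤ γ) (hw : 0 < w) (hξ : ξ ∈ adm B N)
    (hmax : IsMaxOn (objective a γ w B N) (adm B N) ξ) {i : ℕ} (hi : i ∈ Icc 1 N)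
    (hpos : 0 < ξ i) : 0 ≤ marginal a γ w B N ξ i := by
  have := marginal_mul_nonpos hγ hw hξ hmax hi le_rfl
    (by linarith [residual_nonneg hξ (le_refl N)])
  nlinarith

theorem marginal_nonpos_of_isMaxOn (hγ : 0 ≤ γ) (hw : 0 < w) (hξ : ξ ∈ adm B N)
    (hmax : IsMaxOn (objective a γ w B N) (adm B N) ξ) {i : ℕ} (hi : i ∈ Icc 1 N)
    (hR : 0 < residual B ξ N) : marginal a γ w B N ξ i ≤ 0 :=
  nonpos_of_mul_nonpos_left (marginal_mul_nonpos hγ hw hξ hmax hi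
    (by linarith [hξ.1 i (mem_Icc.1 hi).1 (mem_Icc.1 hi).2]) le_rfl) hR

theorem residual_pos_of_isMaxOn (hB : 0 < B) (hγ : 0 < γ) (hw : 0 < w) (ha₀ : ∀ j, 0 < a j)
    (hξ : ξ ∈ adm B N) (hmax : IsMaxOn (objective a γ w B N) (adm B N) ξ) :
    0 < residual B ξ N := by
  by_contra! hN
  have hex : ∃ k, residual B ξ k ≤ 0 := ⟨N, hN⟩
  -- the first index at which the budget is used up
  set l := Nat.find hex
  have hl : residual B ξ l ≤ 0 := Nat.find_spec hex
  have hlN : l ≤ N := Nat.find_min' hex hN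
  obtain ⟨k, hk⟩ : ∃ k, l = k + 1 := Nat.exists_eq_succ_of_ne_zero fun hl0 => by
    rw [hl0, residual_zero] at hl
    linarith
  have hprev : 0 < residual B ξ k := not_le.1 (Nat.find_min hex (by omega))
  have hξl : 0 < ξ l := by
    rw [hk, residual_succ] at hl
    rw [hk]
    linarith
  have hzero : ∀ m ∈ Icc l N, residual B ξ m = 0 := fun m hm =>
    le_antisymm ((residual_le_residual hξ (mem_Icc.1 hm).1 (mem_Icc.1 hm).2).trans hl)
      (residual_nonneg hξ (mem_Icc.1 hm).2)
  have hm := marginal_nonneg_of_isMaxOn hγ.le hw hξ hmax (mem_Icc.2 ⟨by omega, hlN⟩) hξl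
  rw [marginal, budgetPrice_of_residual_eq_zero hlN hzero] at hm
  have : a l * γ / (1 + γ * ξ l) < a l * γ :=
    div_lt_self (mul_pos (ha₀ l) hγ) (lt_add_of_pos_right 1 (mul_pos hγ hξl))
  linarith

theorem pos_of_isMaxOn (hB : 0 < B) (hγ : 0 < γ) (hw : 0 < w) (ha : StrictAnti a)
    (ha₀ : ∀ j, 0 < a j) (hξ : ξ ∈ adm B N) (hmax : IsMaxOn (objective a γ w B N) (adm B N) ξ)
    {j : ℕ} (hj : j ∈ Icc 1 N) : 0 < ξ j := by
  by_contra! hj0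
  have hξj : ξ j = 0 := le_antisymm hj0 (hξ.1 j (mem_Icc.1 hj).1 (mem_Icc.1 hj).2)
  have hR := residual_pos_of_isMaxOn hB hγ hw ha₀ hξ hmax
  have hm := marginal_nonpos_of_isMaxOn hγ.le hw hξ hmax hj hR
  rw [marginal, hξj, mul_zero, add_zero, div_one] at hm
  linarith [budgetPrice_lt hγ hw ha ha₀ hξ hR (mem_Icc.1 hj).2]

theorem lt_and_le_of_marginal_eq_zero (hγ : 0 < γ) (hw : 0 < w) (ha : StrictAnti a)
    (ha₀ : ∀ j, 0 < a j) (hξ : ξ ∈ adm B N) {j : ℕ} (hj : j ∈ Icc 1 N) (hjN : j < N)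
    (h₀ : marginal a γ w B N ξ j = 0) (h₁ : marginal a γ w B N ξ (j + 1) = 0)
    (hpos : 0 < ξ (j + 1)) (hle : γ * ξ (j + 1) ≤ γ / w * residual B ξ (j + 1)) :
    ξ (j + 1) < ξ j ∧ γ * ξ j ≤ γ / w * residual B ξ j := by
  rw [marginal, budgetPrice_eq_add hjN.le, tailWeight_of_lt hjN] at h₀
  rw [marginal] at h₁
  have hX : 0 < 1 + γ * ξ j := by
    have := hξ.1 j (mem_Icc.1 hj).1 (mem_Icc.1 hj).2
    positivity
  have hY : 0 < 1 + γ * ξ (j + 1) := by positivity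
  have hYZ : 1 + γ * ξ (j + 1) < 1 + γ / w * residual B ξ j := by
    have : 0 < γ / w * ξ (j + 1) := by positivity
    rw [residual_succ, mul_sub] at hle
    linarith
  have key : a j / (1 + γ * ξ j) =
      a (j + 1) / (1 + γ * ξ (j + 1)) + (a j - a (j + 1)) / (1 + γ / w * residual B ξ j) := by
    apply mul_left_cancel₀ hγ.ne'
    linear_combination h₀ - h₁
  obtain ⟨hYX, hXZ⟩ :=
    lt_and_lt_of_div_eq_div_add_div (ha₀ _) (ha j.lt_succ_self) hX hY hYZ key
  exact ⟨(mul_lt_mul_iff_of_pos_left hγ).1 (by linarith), by linarith⟩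

theorem le_residual_of_marginal_eq_zero (hγ : 0 < γ) (hw : 0 < w) (ha : StrictAnti a)
    (ha₀ : ∀ j, 0 < a j) (hξ : ξ ∈ adm B N) (hm : ∀ j ∈ Icc 1 N, marginal a γ w B N ξ j = 0)
    (hpos : ∀ j ∈ Icc 1 N, 0 < ξ j) {j : ℕ} (hj : j ∈ Icc 1 N) :
    γ * ξ j ≤ γ / w * residual B ξ j := by
  obtain ⟨hj₁, hjN⟩ := mem_Icc.1 hj
  refine Nat.decreasingInduction' (P := fun k => γ * ξ k ≤ γ / w * residual B ξ k)
    (fun k hkN hjk ih => ?_) hjN ?_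
  · have hk : k ∈ Icc 1 N := mem_Icc.2 ⟨hj₁.trans hjk, hkN.le⟩
    have hk' : k + 1 ∈ Icc 1 N := mem_Icc.2 ⟨by omega, hkN⟩
    exact (lt_and_le_of_marginal_eq_zero hγ hw ha ha₀ hξ hk hkN (hm k hk) (hm _ hk')
      (hpos _ hk') ih).2
  · have hN := hm N (mem_Icc.2 ⟨hj₁.trans hjN, le_rfl⟩)
    have hlast : budgetPrice a γ w B N ξ (N + 1) = 0 := by simp [budgetPrice]
    rw [marginal, budgetPrice_eq_add le_rfl, tailWeight_self, hlast, add_zero, sub_eq_zero,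
      mul_comm γ (a N)] at hN
    have hX : 0 < 1 + γ * ξ N := by
      have := hpos N (mem_Icc.2 ⟨hj₁.trans hjN, le_rfl⟩)
      positivity
    have hZ : 0 < 1 + γ / w * residual B ξ N := by
      have := residual_nonneg hξ (le_refl N)
      positivity
    have := mul_left_cancel₀ (mul_pos (ha₀ N) hγ).ne' ((div_eq_div_iff hX.ne' hZ.ne').1 hN)
    exact (add_left_cancel this).ge

theorem strictAnti_and_pos_of_isMaxOn (hB : 0 < B) (hγ : 0 < γ) (hw : 0 < w)
    (ha : StrictAnti a) (ha₀ : ∀ j, 0 < a j) (hξ : ξ ∈ adm B N)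
    (hmax : IsMaxOn (objective a γ w B N) (adm B N) ξ) :
    (∀ j, 1 ≤ j → j < N → ξ (j + 1) < ξ j) ∧ (∀ j, 1 ≤ j → j ≤ N → 0 < ξ j) := by
  have hpos : ∀ j ∈ Icc 1 N, 0 < ξ j := fun j hj => pos_of_isMaxOn hB hγ hw ha ha₀ hξ hmax hj
  have hR := residual_pos_of_isMaxOn hB hγ hw ha₀ hξ hmax
  have hm : ∀ j ∈ Icc 1 N, marginal a γ w B N ξ j = 0 := fun j hj =>
    le_antisymm (marginal_nonpos_of_isMaxOn hγ.le hw hξ hmax hj hR)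
      (marginal_nonneg_of_isMaxOn hγ.le hw hξ hmax hj (hpos j hj))
  refine ⟨fun j hj hjN => ?_, fun j hj hjN => hpos j (mem_Icc.2 ⟨hj, hjN⟩)⟩
  have hj' : j + 1 ∈ Icc 1 N := mem_Icc.2 ⟨by omega, hjN⟩
  exact (lt_and_le_of_marginal_eq_zero hγ hw ha ha₀ hξ (mem_Icc.2 ⟨hj, hjN.le⟩) hjN
    (hm j (mem_Icc.2 ⟨hj, hjN.le⟩)) (hm _ hj') (hpos _ hj')
    (le_residual_of_marginal_eq_zero hγ hw ha ha₀ hξ hm hpos hj')).1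

end

noncomputable def throughputWeight (p : ℝ) (w j : ℕ) : ℝ := p * (1 - p) ^ (j + w - 1) * (1 / 2)

section

variable {B γ p : ℝ} {w N : ℕ}

theorem throughputWeight_pos (hp : 0 < p) (hp1 : p < 1) (j : ℕ) :
    0 < throughputWeight p w j := by
  have : 0 < 1 - p := sub_pos.2 hp1
  unfold throughputWeight
  positivity

theorem throughputWeight_succ (hw : 1 ≤ w) (j : ℕ) :
    throughputWeight p w (j + 1) = (1 - p) * throughputWeight p w j := by
  rw [throughputWeight, throughputWeight, show j + 1 + w - 1 = j + w - 1 + 1 by omega, pow_succ]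
  ring

theorem throughputWeight_strictAnti (hw : 1 ≤ w) (hp : 0 < p) (hp1 : p < 1) :
    StrictAnti (throughputWeight p w) :=
  strictAnti_nat_of_succ_lt fun j => by
    rw [throughputWeight_succ hw]
    nlinarith [throughputWeight_pos (w := w) hp hp1 j]

theorem mul_throughputWeight_sub_succ (hw : 1 ≤ w) (k : ℕ) :
    (w : ℝ) * (throughputWeight p w k - throughputWeight p w (k + 1)) =
      p ^ 2 * (1 - p) ^ (k + w - 1) * ((w : ℝ) / 2) := by
  rw [throughputWeight_succ hw, throughputWeight]
  ring

theorem mul_throughputWeight_succ (N : ℕ) :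
    (w : ℝ) * throughputWeight p w (N + 1) = p * (1 - p) ^ (w + N) * ((w : ℝ) / 2) := by
  rw [throughputWeight, show N + 1 + w - 1 = w + N by omega]
  ring

theorem TN_sub_TN (hw : 1 ≤ w) (ξ η : ℕ → ℝ) :
    TN B γ p w N ξ - TN B γ p w N η =
      (objective (throughputWeight p w) γ w B N ξ -
        objective (throughputWeight p w) γ w B N η) / log 2 := by
  rcases N.eq_zero_or_pos with rfl | hN
  · simp [TN, objective]
  simp only [objective_eq_of_one_le hN, mul_throughputWeight_sub_succ hw,
    mul_throughputWeight_succ]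
  simp only [TN, throughputWeight, residual, logb, sum_div, add_div, sub_div, mul_div_assoc]
  ring

theorem TN_le_TN_iff (hw : 1 ≤ w) {ξ η : ℕ → ℝ} :
    TN B γ p w N η ≤ TN B γ p w N ξ ↔
      objective (throughputWeight p w) γ w B N η ≤
        objective (throughputWeight p w) γ w B N ξ := by
  rw [← sub_nonneg, TN_sub_TN hw, le_div_iff₀ (log_pos one_lt_two), zero_mul, sub_nonneg]

end

end Throughput

theorem TN_maximizer_strict_decreasing_pos_general (B γ p : ℝ) (w N : ℕ) (hB : 0 < B)
    (hγ : 0 < γ) (hw : 1 ≤ w) (hp : 0 < p) (hp1 : p < 1) (ξ : ℕ → ℝ)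
    (hξ : ξ ∈ adm B N) (hmax : ∀ η ∈ adm B N, TN B γ p w N η ≤ TN B γ p w N ξ) :
    (∀ j, 1 ≤ j → j < N → ξ (j + 1) < ξ j) ∧ (∀ j, 1 ≤ j → j ≤ N → 0 < ξ j) :=
  Throughput.strictAnti_and_pos_of_isMaxOn hB hγ (by exact_mod_cast hw)
    (Throughput.throughputWeight_strictAnti hw hp hp1) (Throughput.throughputWeight_pos hp hp1)
    hξ (isMaxOn_iff.2 fun η hη => (Throughput.TN_le_TN_iff hw).1 (hmax η hη))

/-- The maximizer of `T_N` is strictly decreasing in `j` and all its entries are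
strictly positive: `ξ_1 > ξ_2 > … > ξ_N > 0`. -/
theorem TN_maximizer_strict_decreasing_pos (B γ p : ℝ) (w N : ℕ) (hB : 0 < B)
    (hγ : 0 < γ) (hw : 1 ≤ w) (hp : 0 < p) (hp1 : p < 1) (hN : 1 ≤ N) (ξ : ℕ → ℝ)
    (hξ : ξ ∈ adm B N) (hmax : ∀ η ∈ adm B N, TN B γ p w N η ≤ TN B γ p w N ξ) :
    (∀ j, 1 ≤ j → j < N → ξ (j + 1) < ξ j) ∧ (∀ j, 1 ≤ j → j ≤ N → 0 < ξ j) :=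
  TN_maximizer_strict_decreasing_pos_general B γ p w N hB hγ hw hp hp1 ξ hξ hmax
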